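/- arXiv:2411.05156 — 2 statements merged into one kernel-verified Lean document; each statement's English description precedes it below -/
import Mathlib

section
/- Let x, y ∈ ℝ^d and r > 0, δ ∈ (0,1]. If u_1, ..., u_d are i.i.d. Exponential(1) random variables, then the probability that there exists a coordinate i with |x_i - y_i| / u_i^{1/p} ≥ r / δ^{1/p} is exactly 1 - exp(-δ · ‖x-y‖_p^p / r^p), which is at most δ · (‖x-y‖_p / r)^p. -/
open MeasureTheory ProbabilityTheory Real

/-!
For `u > 0` the `i`-th condition is equivalent to `u_i ≤ t_i := δ |x_i - y_i|^p / r^p`, so the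
complement of the event is almost surely `⋂ i, {u_i > t_i}`. By independence and the exponential
tails it has probability `∏ i, exp (-t_i) = exp (-∑ i, t_i)`, and `∑ i, t_i = δ ‖x - y‖_p^p / r^p`.
The bound is `1 - exp (-a) ≤ a`.
-/

lemma div_rpow_one_div_le_div_rpow_one_div_iff {p r δ a v : ℝ} (hp : 0 < p) (hr : 0 < r)
    (hδ : 0 < δ) (ha : 0 ≤ a) (hv : 0 < v) :
    r / δ ^ (1 / p) ≤ a / v ^ (1 / p) ↔ v ≤ δ * a ^ p / r ^ p := by
  have mul_rpow_one_div : ∀ {b c : ℝ}, 0 ≤ b → 0 ≤ c → b * c ^ (1 / p) = (b ^ p * c) ^ (1 / p) := by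
    intro b c hb hc
    rw [mul_rpow (by positivity) hc, ← rpow_mul hb, mul_one_div_cancel hp.ne', rpow_one]
  rw [div_le_div_iff₀ (by positivity) (by positivity), le_div_iff₀ (by positivity),
    mul_rpow_one_div hr.le hv.le, mul_rpow_one_div ha hδ.le,
    rpow_le_rpow_iff (by positivity) (by positivity) (by positivity), mul_comm v, mul_comm δ]

section ExponentialTails

variable {Ω ι : Type*} [MeasurableSpace Ω] {μ : Measure Ω} [Fintype ι] {u : ι → Ω → ℝ}

lemma measure_iInter_lt_eq_exp_neg_sum (hindep : iIndepFun u μ)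
    (hexp : ∀ i, ∀ t : ℝ, 0 ≤ t → μ {ω | u i ω > t} = ENNReal.ofReal (exp (-t)))
    {t : ι → ℝ} (ht : ∀ i, 0 ≤ t i) :
    μ (⋂ i, {ω | t i < u i ω}) = ENNReal.ofReal (exp (-∑ i, t i)) := by
  rw [hindep.meas_iInter (s := fun i => {ω | t i < u i ω})
      fun i => ⟨Set.Ioi (t i), measurableSet_Ioi, rfl⟩,
    Finset.prod_congr rfl fun i _ => hexp i (t i) (ht i),
    ← ENNReal.ofReal_prod_of_nonneg fun i _ => (exp_pos _).le, ← exp_sum, Finset.sum_neg_distrib]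

lemma measure_exists_le_eq_one_sub_exp_neg_sum [IsProbabilityMeasure μ]
    (hmeas : ∀ i, Measurable (u i)) (hindep : iIndepFun u μ)
    (hexp : ∀ i, ∀ t : ℝ, 0 ≤ t → μ {ω | u i ω > t} = ENNReal.ofReal (exp (-t)))
    {t : ι → ℝ} (ht : ∀ i, 0 ≤ t i) :
    μ {ω | ∃ i, u i ω ≤ t i} = ENNReal.ofReal (1 - exp (-∑ i, t i)) := by
  have hcompl : {ω | ∃ i, u i ω ≤ t i} = (⋂ i, {ω | t i < u i ω})ᶜ := by
    ext ω
    simp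
  have hmeas_iInter : MeasurableSet (⋂ i, {ω | t i < u i ω}) :=
    .iInter fun i => hmeas i measurableSet_Ioi
  rw [hcompl, prob_compl_eq_one_sub hmeas_iInter,
    measure_iInter_lt_eq_exp_neg_sum hindep hexp ht, ← ENNReal.ofReal_one,
    ← ENNReal.ofReal_sub _ (exp_pos _).le]

lemma ae_pos_of_exp_tail [IsProbabilityMeasure μ] (hmeas : ∀ i, Measurable (u i))
    (hexp : ∀ i, ∀ t : ℝ, 0 ≤ t → μ {ω | u i ω > t} = ENNReal.ofReal (exp (-t))) :
    ∀ᵐ ω ∂μ, ∀ i, 0 < u i ω := by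
  refine ae_all_iff.2 fun i => (ae_iff_measure_eq ?_).2 ?_
  · exact (hmeas i measurableSet_Ioi).nullMeasurableSet
  · simpa using hexp i 0 le_rfl

end ExponentialTails

lemma one_sub_exp_neg_le (a : ℝ) : 1 - exp (-a) ≤ a := by
  linarith [add_one_le_exp (-a)]

theorem stmt_0_general
    {Ω : Type*} [MeasurableSpace Ω] (μ : Measure Ω) [IsProbabilityMeasure μ]
    (d : ℕ) (p : ℝ) (hp : 1 ≤ p)
    (x y : Fin d → ℝ) (r δ : ℝ) (hr : 0 < r) (hδ0 : 0 < δ)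
    (u : Fin d → Ω → ℝ)
    (hmeas : ∀ i, Measurable (u i))
    (hindep : iIndepFun u μ)
    (hexp : ∀ i, ∀ t : ℝ, 0 ≤ t → μ {ω | u i ω > t} = ENNReal.ofReal (Real.exp (-t))) :
    μ {ω | ∃ i : Fin d, |x i - y i| / (u i ω) ^ (1 / p) ≥ r / δ ^ (1 / p)}
      = ENNReal.ofReal
          (1 - Real.exp (-(δ * ((∑ i, |x i - y i| ^ p) ^ (1 / p)) ^ p / r ^ p))) ∧
    μ {ω | ∃ i : Fin d, |x i - y i| / (u i ω) ^ (1 / p) ≥ r / δ ^ (1 / p)}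
      ≤ ENNReal.ofReal (δ * (((∑ i, |x i - y i| ^ p) ^ (1 / p)) / r) ^ p) := by
  have hp0 : 0 < p := one_pos.trans_le hp
  set t : Fin d → ℝ := fun i => δ * |x i - y i| ^ p / r ^ p
  have hevent : {ω | ∃ i, |x i - y i| / (u i ω) ^ (1 / p) ≥ r / δ ^ (1 / p)}
      =ᵐ[μ] {ω | ∃ i, u i ω ≤ t i} := by
    filter_upwards [ae_pos_of_exp_tail hmeas hexp] with ω hω
    refine propext (exists_congr fun i => ?_)
    exact div_rpow_one_div_le_div_rpow_one_div_iff hp0 hr hδ0 (abs_nonneg _) (hω i)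
  have hsum : ∑ i, t i = δ * ((∑ i, |x i - y i| ^ p) ^ (1 / p)) ^ p / r ^ p := by
    rw [one_div, rpow_inv_rpow (by positivity) hp0.ne', Finset.mul_sum, Finset.sum_div]
  have hprob := measure_exists_le_eq_one_sub_exp_neg_sum hmeas hindep hexp (t := t)
    fun i => by positivity
  rw [measure_congr hevent, hprob, hsum]
  refine ⟨rfl, ENNReal.ofReal_le_ofReal ?_⟩
  rw [div_rpow (by positivity) hr.le, ← mul_div_assoc]
  exact one_sub_exp_neg_le _

/-- For `x, y ∈ ℝ^d`, `r > 0`, `δ ∈ (0,1]`, and i.i.d. Exponential(1)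
random variables `u_1, …, u_d`, the probability that some coordinate `i` satisfies
`|x_i - y_i| / u_i^(1/p) ≥ r / δ^(1/p)` equals `1 - exp(-δ‖x-y‖_p^p / r^p)`,
which is at most `δ (‖x-y‖_p / r)^p`. -/
theorem stmt_0
    {Ω : Type*} [MeasurableSpace Ω] (μ : Measure Ω) [IsProbabilityMeasure μ]
    (d : ℕ) (p : ℝ) (hp : 1 ≤ p)
    (x y : Fin d → ℝ) (r δ : ℝ) (hr : 0 < r) (hδ0 : 0 < δ) (hδ1 : δ ≤ 1)
    (u : Fin d → Ω → ℝ)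
    (hmeas : ∀ i, Measurable (u i))
    (hindep : iIndepFun u μ)
    (hexp : ∀ i, ∀ t : ℝ, 0 ≤ t → μ {ω | u i ω > t} = ENNReal.ofReal (Real.exp (-t))) :
    μ {ω | ∃ i : Fin d, |x i - y i| / (u i ω) ^ (1 / p) ≥ r / δ ^ (1 / p)}
      = ENNReal.ofReal
          (1 - Real.exp (-(δ * ((∑ i, |x i - y i| ^ p) ^ (1 / p)) ^ p / r ^ p))) ∧
    μ {ω | ∃ i : Fin d, |x i - y i| / (u i ω) ^ (1 / p) ≥ r / δ ^ (1 / p)}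
      ≤ ENNReal.ofReal (δ * (((∑ i, |x i - y i| ^ p) ^ (1 / p)) / r) ^ p) :=
  stmt_0_general μ d p hp x y r δ hr hδ0 u hmeas hindep hexp
end

section
/- Let x ∈ ℝ^d be nonzero, p ≥ 1, and let u_1,...,u_d be i.i.d. Exponential(1). Let D_1 > 0 and D_2 = 2D_1, and let K > 0. Then with probability at least 1 - exp(-D_1^p) - D_2^p/K, both of the following hold: at least one coordinate i satisfies |x_i|/u_i^{1/p} ≥ ‖x‖_p/D_1, and at most K coordinates i satisfy |x_i|/u_i^{1/p} ≥ ‖x‖_p/D_2. -/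
open MeasureTheory ProbabilityTheory Real
open scoped Finset ENNReal

/-! For `u > 0` the event `|x i| / u ^ (1/p) ≥ ‖x‖_p / D` is the event `u ≤ τ_D i`, where
`τ_D i = (D |x i| / ‖x‖_p) ^ p` (`expThreshold`) and `∑ i, τ_D i = D ^ p`. By independence,
no coordinate passes the `D₁`-threshold with probability
`∏ i, exp (-τ_{D₁} i) = exp (-D₁ ^ p)`. A coordinate passes the `D₂`-threshold with probability
`1 - exp (-τ_{D₂} i) ≤ τ_{D₂} i`, so the expected number of such coordinates is at most
`D₂ ^ p`, and Markov's inequality bounds the probability that there are more than `K`. A union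
bound over the two bad events finishes the proof. -/

section ExponentialTail

variable {Ω : Type*} [MeasurableSpace Ω] {μ : Measure Ω}

theorem measure_forall_lt_of_iIndep_exp_tail {ι : Type*} [Fintype ι] {u : ι → Ω → ℝ}
    {τ : ι → ℝ} (hindep : iIndepFun u μ)
    (htail : ∀ i, ∀ t : ℝ, 0 ≤ t → μ {ω | u i ω > t} = ENNReal.ofReal (exp (-t)))
    (hτ : ∀ i, 0 ≤ τ i) :
    μ {ω | ∀ i, τ i < u i ω} = ENNReal.ofReal (exp (-∑ i, τ i)) := by
  have hinter : {ω | ∀ i, τ i < u i ω} = ⋂ i, {ω | u i ω > τ i} := by ext; simp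
  rw [hinter, hindep.meas_iInter (s := fun i => {ω | u i ω > τ i})
      fun i => ⟨Set.Ioi (τ i), measurableSet_Ioi, rfl⟩,
    Finset.prod_congr rfl fun i _ => htail i (τ i) (hτ i),
    ← ENNReal.ofReal_prod_of_nonneg fun i _ => (exp_pos _).le, ← exp_sum,
    Finset.sum_neg_distrib]

variable [IsProbabilityMeasure μ]

theorem ae_pos_of_exp_tail_s3 {U : Ω → ℝ} (hU : Measurable U)
    (htail : ∀ t : ℝ, 0 ≤ t → μ {ω | U ω > t} = ENNReal.ofReal (exp (-t))) :
    ∀ᵐ ω ∂μ, 0 < U ω := by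
  have hpos : MeasurableSet {ω | 0 < U ω} := hU measurableSet_Ioi
  rw [ae_iff_measure_eq hpos.nullMeasurableSet, measure_univ]
  simpa using htail 0 le_rfl

theorem measure_le_le_ofReal_of_exp_tail {U : Ω → ℝ} (hU : Measurable U)
    (htail : ∀ t : ℝ, 0 ≤ t → μ {ω | U ω > t} = ENNReal.ofReal (exp (-t)))
    {t : ℝ} (ht : 0 ≤ t) : μ {ω | U ω ≤ t} ≤ ENNReal.ofReal t := by
  have hcompl : {ω | U ω ≤ t} = {ω | U ω > t}ᶜ := by ext; simp
  have hgt : MeasurableSet {ω | U ω > t} := hU measurableSet_Ioi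
  rw [hcompl, prob_compl_eq_one_sub hgt, htail t ht, ← ENNReal.ofReal_one,
    ← ENNReal.ofReal_sub _ (exp_pos _).le]
  exact ENNReal.ofReal_le_ofReal (by linarith [add_one_le_exp (-t)])

end ExponentialTail

theorem measure_lt_card_filter_mem_le {Ω ι : Type*} [MeasurableSpace Ω] {μ : Measure Ω}
    [Fintype ι] {A : ι → Set Ω} [∀ ω, DecidablePred (ω ∈ A ·)]
    (hA : ∀ i, MeasurableSet (A i)) {K : ℝ} (hK : 0 < K) :
    μ {ω | K < #{i | ω ∈ A i}} ≤ (∑ i, μ (A i)) / ENNReal.ofReal K := by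
  have hcount : ∀ ω, (#{i | ω ∈ A i} : ℝ≥0∞) = ∑ i, (A i).indicator 1 ω := by
    intro ω
    simp [Set.indicator_apply, Finset.sum_boole]
  calc μ {ω | K < #{i | ω ∈ A i}}
      ≤ μ {ω | ENNReal.ofReal K ≤ ∑ i, (A i).indicator 1 ω} := by
        refine measure_mono fun ω hω => ?_
        simp only [Set.mem_ofPred_eq, ← hcount] at hω ⊢
        exact (ENNReal.ofReal_le_ofReal hω.le).trans_eq (ENNReal.ofReal_natCast _)
    _ ≤ (∫⁻ ω, ∑ i, (A i).indicator 1 ω ∂μ) / ENNReal.ofReal K :=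
        meas_ge_le_lintegral_div (by fun_prop (disch := exact hA _))
          (by simpa using hK) ENNReal.ofReal_ne_top
    _ = (∑ i, μ (A i)) / ENNReal.ofReal K := by
        rw [lintegral_finsetSum _ fun i _ => measurable_one.indicator (hA i)]
        simp_rw [lintegral_indicator_one (hA _)]

theorem ofReal_one_sub_sub_le_measure_inter {Ω : Type*} [MeasurableSpace Ω] {μ : Measure Ω}
    [IsProbabilityMeasure μ] {s t : Set Ω} {a b : ℝ} (ha : 0 ≤ a) (hb : 0 ≤ b)
    (hs : μ sᶜ ≤ ENNReal.ofReal a) (ht : μ tᶜ ≤ ENNReal.ofReal b) :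
    ENNReal.ofReal (1 - a - b) ≤ μ (s ∩ t) := by
  have hcover : 1 ≤ μ (s ∩ t) + μ sᶜ + μ tᶜ := by
    rw [← measure_univ (μ := μ)]
    refine (measure_mono fun ω _ => ?_).trans
      ((measure_union_le _ _).trans (add_le_add (measure_union_le _ _) le_rfl))
    simp only [Set.mem_union, Set.mem_inter_iff, Set.mem_compl_iff]
    tauto
  rw [ENNReal.ofReal_sub _ hb, ENNReal.ofReal_sub _ ha, ENNReal.ofReal_one, tsub_le_iff_right,
    tsub_le_iff_right]
  calc 1 ≤ μ (s ∩ t) + μ sᶜ + μ tᶜ := hcover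
    _ ≤ μ (s ∩ t) + ENNReal.ofReal a + ENNReal.ofReal b := by gcongr
    _ = μ (s ∩ t) + ENNReal.ofReal b + ENNReal.ofReal a := add_right_comm _ _ _

theorem div_le_div_rpow_one_div_iff {a S D w p : ℝ} (ha : 0 ≤ a) (hS : 0 < S) (hD : 0 < D)
    (hw : 0 < w) (hp : 0 < p) : S / D ≤ a / w ^ (1 / p) ↔ w ≤ (D * a / S) ^ p := by
  rw [div_le_div_iff₀ hD (rpow_pos_of_pos hw _), ← le_div_iff₀' hS, one_div,
    rpow_inv_le_iff_of_pos hw.le (by positivity) hp, mul_comm a D]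

theorem sum_abs_rpow_pos {ι : Type*} [Fintype ι] {x : ι → ℝ} (hx : x ≠ 0) (p : ℝ) :
    0 < ∑ i, |x i| ^ p := by
  obtain ⟨i, hi⟩ := Function.ne_iff.1 hx
  exact Finset.sum_pos' (fun j _ => rpow_nonneg (abs_nonneg _) _)
    ⟨i, Finset.mem_univ i, rpow_pos_of_pos (abs_pos.2 hi) p⟩

section Thresholds

variable {Ω ι : Type*} [MeasurableSpace Ω] {μ : Measure Ω} [Fintype ι] {x : ι → ℝ}
  {u : ι → Ω → ℝ} {p D : ℝ}

noncomputable def expThreshold (p D : ℝ) (x : ι → ℝ) (i : ι) : ℝ :=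
  (D * |x i| / (∑ j, |x j| ^ p) ^ (1 / p)) ^ p

theorem expThreshold_nonneg (hD : 0 ≤ D) (i : ι) : 0 ≤ expThreshold p D x i := by
  have : 0 ≤ (∑ j, |x j| ^ p) ^ (1 / p) :=
    rpow_nonneg (Finset.sum_nonneg fun j _ => rpow_nonneg (abs_nonneg _) _) _
  unfold expThreshold
  positivity

theorem sum_expThreshold (hx : x ≠ 0) (hp : 0 < p) (hD : 0 ≤ D) :
    ∑ i, expThreshold p D x i = D ^ p := by
  have hsum := sum_abs_rpow_pos hx p
  simp_rw [expThreshold, div_rpow (mul_nonneg hD (abs_nonneg _)) (rpow_nonneg hsum.le _),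
    mul_rpow hD (abs_nonneg _), one_div, rpow_inv_rpow hsum.le hp.ne', ← Finset.sum_div,
    ← Finset.mul_sum, mul_div_cancel_right₀ _ hsum.ne']

variable [IsProbabilityMeasure μ]

theorem ae_forall_div_rpow_ge_iff_le_expThreshold (hx : x ≠ 0) (hp : 0 < p) (hD : 0 < D)
    (hmeas : ∀ i, Measurable (u i))
    (hexp : ∀ i, ∀ t : ℝ, 0 ≤ t → μ {ω | u i ω > t} = ENNReal.ofReal (exp (-t))) :
    ∀ᵐ ω ∂μ, ∀ i, |x i| / u i ω ^ (1 / p) ≥ (∑ j, |x j| ^ p) ^ (1 / p) / D ↔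
      u i ω ≤ expThreshold p D x i := by
  filter_upwards [ae_all_iff.2 fun i => ae_pos_of_exp_tail_s3 (hmeas i) (hexp i)] with ω hω i
  exact div_le_div_rpow_one_div_iff (abs_nonneg _)
    (rpow_pos_of_pos (sum_abs_rpow_pos hx p) _) hD (hω i) hp

theorem measure_not_exists_div_rpow_ge (hx : x ≠ 0) (hp : 0 < p) (hD : 0 < D)
    (hmeas : ∀ i, Measurable (u i)) (hindep : iIndepFun u μ)
    (hexp : ∀ i, ∀ t : ℝ, 0 ≤ t → μ {ω | u i ω > t} = ENNReal.ofReal (exp (-t))) :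
    μ {ω | ∃ i, |x i| / u i ω ^ (1 / p) ≥ (∑ j, |x j| ^ p) ^ (1 / p) / D}ᶜ =
      ENNReal.ofReal (exp (-D ^ p)) := by
  rw [← sum_expThreshold hx hp hD.le,
    ← measure_forall_lt_of_iIndep_exp_tail hindep hexp (expThreshold_nonneg hD.le)]
  refine measure_congr ?_
  filter_upwards [ae_forall_div_rpow_ge_iff_le_expThreshold hx hp hD hmeas hexp] with ω hω
  change (¬∃ i, _) = ∀ i, _
  simp only [hω, not_exists, not_le]

theorem measure_card_div_rpow_ge_gt_le (hx : x ≠ 0) (hp : 0 < p) (hD : 0 < D) {K : ℝ}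
    (hK : 0 < K) (hmeas : ∀ i, Measurable (u i))
    (hexp : ∀ i, ∀ t : ℝ, 0 ≤ t → μ {ω | u i ω > t} = ENNReal.ofReal (exp (-t))) :
    μ {ω | #{i | |x i| / u i ω ^ (1 / p) ≥ (∑ j, |x j| ^ p) ^ (1 / p) / D} ≤ K}ᶜ ≤
      ENNReal.ofReal (D ^ p / K) := by
  calc _ = μ {ω | K < #{i | u i ω ≤ expThreshold p D x i}} := by
        refine measure_congr ?_
        filter_upwards [ae_forall_div_rpow_ge_iff_le_expThreshold hx hp hD hmeas hexp] with ω hω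
        change (¬ (#{i | _} : ℝ) ≤ K) = (K < #{i | u i ω ≤ expThreshold p D x i})
        simp only [hω, not_le]
    _ ≤ (∑ i, μ {ω | u i ω ≤ expThreshold p D x i}) / ENNReal.ofReal K :=
        measure_lt_card_filter_mem_le (A := fun i => {ω | u i ω ≤ expThreshold p D x i})
          (fun i => hmeas i measurableSet_Iic) hK
    _ ≤ (∑ i, ENNReal.ofReal (expThreshold p D x i)) / ENNReal.ofReal K := by
        gcongr with i
        exact measure_le_le_ofReal_of_exp_tail (hmeas i) (hexp i) (expThreshold_nonneg hD.le i)
    _ = ENNReal.ofReal (D ^ p / K) := by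
        rw [← ENNReal.ofReal_sum_of_nonneg fun i _ => expThreshold_nonneg hD.le i,
          sum_expThreshold hx hp hD.le, ENNReal.ofReal_div_of_pos hK]

end Thresholds

/-- For nonzero `x ∈ ℝ^d`, `p ≥ 1`, i.i.d. Exponential(1) random variables
`u_1, …, u_d`, `D₁ > 0`, `D₂ = 2 D₁`, and `K > 0`: with probability at least
`1 - exp(-D₁^p) - D₂^p / K`, at least one coordinate satisfies
`|x_i|/u_i^(1/p) ≥ ‖x‖_p / D₁` and at most `K` coordinates satisfy
`|x_i|/u_i^(1/p) ≥ ‖x‖_p / D₂`. -/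
theorem stmt_3
    {Ω : Type*} [MeasurableSpace Ω] (μ : Measure Ω) [IsProbabilityMeasure μ]
    (d : ℕ) (p : ℝ) (hp : 1 ≤ p)
    (x : Fin d → ℝ) (hx : x ≠ 0) (D₁ D₂ K : ℝ) (hD₁ : 0 < D₁) (hD₂ : D₂ = 2 * D₁)
    (hK : 0 < K)
    (u : Fin d → Ω → ℝ)
    (hmeas : ∀ i, Measurable (u i))
    (hindep : iIndepFun u μ)
    (hexp : ∀ i, ∀ t : ℝ, 0 ≤ t → μ {ω | u i ω > t} = ENNReal.ofReal (Real.exp (-t))) :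
    μ {ω | (∃ i : Fin d, |x i| / (u i ω) ^ (1 / p) ≥ ((∑ i, |x i| ^ p) ^ (1 / p)) / D₁) ∧
        ((Finset.univ.filter
          (fun i : Fin d =>
            |x i| / (u i ω) ^ (1 / p) ≥ ((∑ i, |x i| ^ p) ^ (1 / p)) / D₂)).card : ℝ) ≤ K}
      ≥ ENNReal.ofReal (1 - Real.exp (-(D₁ ^ p)) - D₂ ^ p / K) := by
  have hp₀ : 0 < p := one_pos.trans_le hp
  have hD₂₀ : 0 < D₂ := by rw [hD₂]; positivity
  exact ofReal_one_sub_sub_le_measure_inter (exp_pos _).le (by positivity)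
    (measure_not_exists_div_rpow_ge hx hp₀ hD₁ hmeas hindep hexp).le
    (measure_card_div_rpow_ge_gt_le hx hp₀ hD₂₀ hK hmeas hexp)
end
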